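/- Suppose f : ℝ → ℝ is real analytic (so that solutions of the flow are unique). Let t ↦ (w_1(t), w_2(t)) be a solution of the vector overparameterized gradient flow on [0, T). If f'(⟨w_2(0), w_1(0)⟩) > 0, then f'(⟨w_2(t), w_1(t)⟩) > 0 for all t ∈ [0, T); likewise, if f'(⟨w_2(0), w_1(0)⟩) < 0, then f'(⟨w_2(t), w_1(t)⟩) < 0 for all t ∈ [0, T). -/

import Mathlib

open scoped RealInnerProductSpace

noncomputable section

abbrev EVec (k : ℕ) : Type := EuclideanSpace ℝ (Fin k)

/-- The vector overparameterized gradient flow equations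
`ẇ₁ = −f'(⟪w₂, w₁⟫) w₂`, `ẇ₂ = −f'(⟪w₂, w₁⟫) w₁` at time `t`. -/
def IsVecFlowAt {k : ℕ} (f : ℝ → ℝ) (w1 w2 : ℝ → EVec k) (t : ℝ) : Prop :=
  HasDerivAt w1 (-(deriv f ⟪w2 t, w1 t⟫) • w2 t) t ∧
  HasDerivAt w2 (-(deriv f ⟪w2 t, w1 t⟫) • w1 t) t

/-! Along the flow, `h(t) = f'(⟪w₂ t, w₁ t⟫)` solves the scalar linear ODE
`h' = -f''(⟪w₂, w₁⟫) (‖w₁‖² + ‖w₂‖²) h`, whose coefficient is continuous because `f` is `C²`.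
By uniqueness of solutions of this ODE, `h` cannot vanish at some `s ∈ [0, T)` unless `h(0) = 0`;
the intermediate value theorem then shows that `h` keeps its initial sign. -/

open Set

theorem eqOn_zero_of_hasDerivAt_smul_self {E : Type*} [NormedAddCommGroup E] [NormedSpace ℝ E]
    {u : ℝ → E} {c : ℝ → ℝ} {a b : ℝ} (hc : ContinuousOn c (Icc a b))
    (hu : ∀ t ∈ Icc a b, HasDerivAt u (c t • u t) t) (hb : u b = 0) :
    EqOn u 0 (Icc a b) := by
  obtain ⟨C, hC⟩ := isCompact_Icc.exists_bound_of_continuousOn hc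
  have hlip : ∀ t ∈ Ioc a b, LipschitzOnWith (Real.toNNReal C) (c t • · : E → E) univ := by
    refine fun t ht => ((lipschitzWith_smul (c t)).weaken ?_).lipschitzOnWith
    rw [← NNReal.coe_le_coe, coe_nnnorm, Real.coe_toNNReal']
    exact (hC t (Ioc_subset_Icc_self ht)).trans (le_max_left _ _)
  refine ODE_solution_unique_of_mem_Icc_left hlip
    (fun t ht => (hu t ht).continuousAt.continuousWithinAt)
    (fun t ht => (hu t (Ioc_subset_Icc_self ht)).hasDerivWithinAt) (fun _ _ => trivial)
    continuousOn_const (fun t _ => ?_) (fun _ _ => trivial) hb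
  rw [Pi.zero_apply, smul_zero]
  exact hasDerivWithinAt_const t (Iic t) 0

theorem pos_of_hasDerivAt_mul_self {u c : ℝ → ℝ} {a b : ℝ} (hab : a ≤ b)
    (hc : ContinuousOn c (Icc a b)) (hu : ∀ t ∈ Icc a b, HasDerivAt u (c t * u t) t)
    (ha : 0 < u a) : 0 < u b := by
  by_contra! hb
  have hcont : ContinuousOn u (Icc a b) := fun t ht => (hu t ht).continuousAt.continuousWithinAt
  obtain ⟨s, hs, hus⟩ := intermediate_value_Icc' hab hcont ⟨hb, ha.le⟩
  have hsub : Icc a s ⊆ Icc a b := Icc_subset_Icc_right hs.2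
  have hua : u a = 0 := eqOn_zero_of_hasDerivAt_smul_self (hc.mono hsub)
    (fun t ht => hu t (hsub ht)) hus (left_mem_Icc.2 hs.1)
  exact ha.ne' hua

theorem neg_of_hasDerivAt_mul_self {u c : ℝ → ℝ} {a b : ℝ} (hab : a ≤ b)
    (hc : ContinuousOn c (Icc a b)) (hu : ∀ t ∈ Icc a b, HasDerivAt u (c t * u t) t)
    (ha : u a < 0) : u b < 0 := by
  have hneg : ∀ t ∈ Icc a b, HasDerivAt (-u) (c t * (-u) t) t := fun t ht => by
    simpa only [Pi.neg_apply, mul_neg] using (hu t ht).neg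
  simpa using pos_of_hasDerivAt_mul_self hab hc hneg (neg_pos.2 ha)

section VecFlow

variable {k : ℕ} {f : ℝ → ℝ} {w1 w2 : ℝ → EVec k} {t : ℝ}

theorem IsVecFlowAt.hasDerivAt_inner (h : IsVecFlowAt f w1 w2 t) :
    HasDerivAt (fun s => ⟪w2 s, w1 s⟫)
      (-(deriv f ⟪w2 t, w1 t⟫ * (‖w1 t‖ ^ 2 + ‖w2 t‖ ^ 2))) t := by
  refine (h.2.inner ℝ h.1).congr_deriv ?_
  rw [real_inner_smul_right, real_inner_smul_left, real_inner_self_eq_norm_sq,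
    real_inner_self_eq_norm_sq]
  ring

theorem IsVecFlowAt.hasDerivAt_deriv_comp_inner (h : IsVecFlowAt f w1 w2 t)
    (hf : DifferentiableAt ℝ (deriv f) ⟪w2 t, w1 t⟫) :
    HasDerivAt (fun s => deriv f ⟪w2 s, w1 s⟫)
      (-(deriv (deriv f) ⟪w2 t, w1 t⟫ * (‖w1 t‖ ^ 2 + ‖w2 t‖ ^ 2)) * deriv f ⟪w2 t, w1 t⟫) t := by
  have := hf.hasDerivAt.comp t h.hasDerivAt_inner
  exact this.congr_deriv (by ring)

theorem exists_linear_ode_deriv_comp_inner (hf : ContDiff ℝ 2 f) {a b : ℝ}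
    (hflow : ∀ t ∈ Icc a b, IsVecFlowAt f w1 w2 t) :
    ∃ c : ℝ → ℝ, ContinuousOn c (Icc a b) ∧
      ∀ t ∈ Icc a b, HasDerivAt (fun s => deriv f ⟪w2 s, w1 s⟫)
        (c t * deriv f ⟪w2 t, w1 t⟫) t := by
  refine ⟨fun s => -(deriv (deriv f) ⟪w2 s, w1 s⟫ * (‖w1 s‖ ^ 2 + ‖w2 s‖ ^ 2)), fun t ht => ?_,
    fun t ht => (hflow t ht).hasDerivAt_deriv_comp_inner (hf.differentiable_deriv_two _)⟩
  obtain ⟨hw1, hw2⟩ := hflow t ht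
  have hf'' : Continuous (deriv (deriv f)) := (hf.deriv' (n := 1)).continuous_deriv_one
  exact ((hf''.continuousAt.comp (hflow t ht).hasDerivAt_inner.continuousAt).mul
    ((hw1.continuousAt.norm.pow 2).add (hw2.continuousAt.norm.pow 2))).neg.continuousWithinAt

end VecFlow

theorem stmt15_general {k : ℕ} (f : ℝ → ℝ)
    (hanalytic : ∀ x : ℝ, AnalyticAt ℝ f x)
    (T : EReal)
    (w1 w2 : ℝ → EVec k)
    (hflow : ∀ t : ℝ, 0 ≤ t → (t : EReal) < T → IsVecFlowAt f w1 w2 t) :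
    (0 < deriv f ⟪w2 0, w1 0⟫ →
        ∀ t : ℝ, 0 ≤ t → (t : EReal) < T → 0 < deriv f ⟪w2 t, w1 t⟫) ∧
      (deriv f ⟪w2 0, w1 0⟫ < 0 →
        ∀ t : ℝ, 0 ≤ t → (t : EReal) < T → deriv f ⟪w2 t, w1 t⟫ < 0) := by
  have hf : ContDiff ℝ 2 f := AnalyticOnNhd.contDiff fun x _ => hanalytic x
  have hflowIcc : ∀ t : ℝ, (t : EReal) < T → ∀ s ∈ Icc 0 t, IsVecFlowAt f w1 w2 s :=
    fun t htT s hs => hflow s hs.1 ((EReal.coe_le_coe_iff.2 hs.2).trans_lt htT)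
  constructor
  · intro h0 t ht0 htT
    obtain ⟨c, hc, hode⟩ := exists_linear_ode_deriv_comp_inner hf (hflowIcc t htT)
    exact (pos_of_hasDerivAt_mul_self ht0 hc hode h0 :)
  · intro h0 t ht0 htT
    obtain ⟨c, hc, hode⟩ := exists_linear_ode_deriv_comp_inner hf (hflowIcc t htT)
    exact (neg_of_hasDerivAt_mul_self ht0 hc hode h0 :)

/-- For real analytic `f`, along any solution of the vector
overparameterized gradient flow on `[0, T)`, the sign of `f'(⟪w₂, w₁⟫)` is preserved:
if it is positive (resp. negative) at `t = 0`, it stays positive (resp. negative) on `[0, T)`. -/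
theorem stmt15 {k : ℕ} (hk : 1 ≤ k) (f : ℝ → ℝ)
    (hanalytic : ∀ x : ℝ, AnalyticAt ℝ f x)
    (T : EReal) (hT : 0 < T)
    (w1 w2 : ℝ → EVec k)
    (hflow : ∀ t : ℝ, 0 ≤ t → (t : EReal) < T → IsVecFlowAt f w1 w2 t) :
    (0 < deriv f ⟪w2 0, w1 0⟫ →
        ∀ t : ℝ, 0 ≤ t → (t : EReal) < T → 0 < deriv f ⟪w2 t, w1 t⟫) ∧
      (deriv f ⟪w2 0, w1 0⟫ < 0 →
        ∀ t : ℝ, 0 ≤ t → (t : EReal) < T → deriv f ⟪w2 t, w1 t⟫ < 0) :=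
  stmt15_general f hanalytic T w1 w2 hflow
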